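/- Let 𝓕 be a collection of subspaces of E satisfying (F1)-(F3), and for a subspace A let r_𝓕(A) denote the length of a maximal chain in (𝓕,⊆) from C_𝓕({0}) to C_𝓕(A). Then (E, r_𝓕) is a q-matroid, i.e. r_𝓕 satisfies (R1) 0 ≤ r_𝓕(A) ≤ dim A, (R2) monotonicity, and (R3) submodularity. -/

import Mathlib

/-- F' covers F in the poset (𝓕, ⊆). -/
def FlatCovers {K E : Type*} [Field K] [AddCommGroup E] [Module K E]
    (𝓕 : Set (Submodule K E)) (F F' : Submodule K E) : Prop :=
  F < F' ∧ ∀ H ∈ 𝓕, F < H → ¬ H < F'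

/-- The flat axioms (F1)-(F3) for a family 𝓕 of subspaces of E. -/
def FlatAxioms {K E : Type*} [Field K] [AddCommGroup E] [Module K E]
    (𝓕 : Set (Submodule K E)) : Prop :=
  (⊤ : Submodule K E) ∈ 𝓕 ∧
  (∀ F₁ ∈ 𝓕, ∀ F₂ ∈ 𝓕, F₁ ⊓ F₂ ∈ 𝓕) ∧
  (∀ F ∈ 𝓕, ∀ x : Submodule K E, Module.finrank K x = 1 → ¬ x ≤ F →
    ∃! F' : Submodule K E, F' ∈ 𝓕 ∧ x ≤ F' ∧ FlatCovers 𝓕 F F')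

/-- `c` is a maximal chain of length `m` in (𝓕,⊆) from `a` to `b`:
its members lie in 𝓕, it is strictly increasing, starts at `a`, ends at `b`,
and each element covers the previous one in (𝓕,⊆). -/
def IsMaxChainTo {K E : Type*} [Field K] [AddCommGroup E] [Module K E]
    (𝓕 : Set (Submodule K E)) (a b : Submodule K E) (m : ℕ)
    (c : Fin (m + 1) → Submodule K E) : Prop :=
  (∀ i, c i ∈ 𝓕) ∧ StrictMono c ∧ c 0 = a ∧ c (Fin.last m) = b ∧
  ∀ i : Fin m, FlatCovers 𝓕 (c i.castSucc) (c i.succ)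

/-!
By (F3), for a flat `F` and a vector `v ∉ F` the flat `C (F ⊔ ⟨v⟩)` covers `F`, and every cover of
`F` containing `v` is this one. Hence two distinct covers `F₁`, `G₁` of a flat are both covered by
`C (F₁ ⊔ G₁)`, and induction on the length of a chain gives the Jordan–Dedekind property: all
maximal chains between two flats have the same length. Adjoining one vector lengthens a chain by at
most one, which gives `r A ≤ dim A`. For submodularity, a maximal chain from `C A ⊓ C B` to `C B` is
pushed step by step to a chain from `C A` to `C (A ⊔ B)` that is no longer.
-/

section

variable {K E : Type*} [Field K] [AddCommGroup E] [Module K E]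
  {𝓕 : Set (Submodule K E)} {C : Submodule K E → Submodule K E}

def IsFlatClosure (𝓕 : Set (Submodule K E)) (C : Submodule K E → Submodule K E) : Prop :=
  ∀ A, C A ∈ 𝓕 ∧ A ≤ C A ∧ ∀ G ∈ 𝓕, A ≤ G → C A ≤ G

namespace IsFlatClosure

variable (hC : IsFlatClosure 𝓕 C) {A B G : Submodule K E}
include hC

lemma mem (A : Submodule K E) : C A ∈ 𝓕 := (hC A).1

lemma le_closure (A : Submodule K E) : A ≤ C A := (hC A).2.1

lemma closure_le (hG : G ∈ 𝓕) (h : A ≤ G) : C A ≤ G := (hC A).2.2 G hG h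

lemma closure_eq_self (hA : A ∈ 𝓕) : C A = A :=
  (hC.closure_le hA le_rfl).antisymm (hC.le_closure A)

lemma closure_mono (h : A ≤ B) : C A ≤ C B :=
  hC.closure_le (hC.mem B) (h.trans (hC.le_closure B))

lemma closure_sup_closure_left : C (C A ⊔ B) = C (A ⊔ B) :=
  (hC.closure_le (hC.mem _) (sup_le (hC.closure_mono le_sup_left)
    (le_sup_right.trans (hC.le_closure _)))).antisymm
    (hC.closure_mono (sup_le_sup_right (hC.le_closure A) B))

lemma closure_sup_closure_right : C (A ⊔ C B) = C (A ⊔ B) := by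
  rw [sup_comm, hC.closure_sup_closure_left, sup_comm]

end IsFlatClosure

lemma FlatCovers.eq_of_lt_of_le {F G H : Submodule K E} (hFG : FlatCovers 𝓕 F G) (hH : H ∈ 𝓕)
    (hFH : F < H) (hHG : H ≤ G) : H = G :=
  hHG.eq_of_not_lt (hFG.2 H hH hFH)

inductive CoverChain (𝓕 : Set (Submodule K E)) : Submodule K E → Submodule K E → ℕ → Prop
  | refl {X : Submodule K E} (hX : X ∈ 𝓕) : CoverChain 𝓕 X X 0
  | cons {X Y Z : Submodule K E} {m : ℕ} (hX : X ∈ 𝓕) (hXY : FlatCovers 𝓕 X Y)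
      (hYZ : CoverChain 𝓕 Y Z m) : CoverChain 𝓕 X Z (m + 1)

namespace CoverChain

variable {X Y Z : Submodule K E} {m n : ℕ}

lemma mem_left (h : CoverChain 𝓕 X Z m) : X ∈ 𝓕 := by
  cases h with
  | refl hX => exact hX
  | cons hX _ _ => exact hX

lemma mem_right (h : CoverChain 𝓕 X Z m) : Z ∈ 𝓕 := by
  induction h with
  | refl hX => exact hX
  | cons _ _ _ ih => exact ih

lemma le (h : CoverChain 𝓕 X Z m) : X ≤ Z := by
  induction h with
  | refl _ => exact le_rfl
  | cons _ hXY _ ih => exact hXY.1.le.trans ih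

lemma trans (hXY : CoverChain 𝓕 X Y m) (hYZ : CoverChain 𝓕 Y Z n) :
    CoverChain 𝓕 X Z (m + n) := by
  induction hXY with
  | refl _ => simpa using hYZ
  | cons hX hcov _ ih => rw [Nat.add_right_comm]; exact cons hX hcov (ih hYZ)

end CoverChain

lemma IsMaxChainTo.coverChain : ∀ {m : ℕ} {a b : Submodule K E} {c : Fin (m + 1) → Submodule K E},
    IsMaxChainTo 𝓕 a b m c → CoverChain 𝓕 a b m
  | 0, a, b, c, ⟨hmem, _, h0, hlast, _⟩ => by
      obtain rfl : a = b := h0.symm.trans hlast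
      exact h0 ▸ CoverChain.refl (hmem 0)
  | m + 1, a, b, c, ⟨hmem, hmono, h0, hlast, hcov⟩ => by
      have htail : IsMaxChainTo 𝓕 (c 1) b m (c ∘ Fin.succ) :=
        ⟨fun i => hmem _, hmono.comp Fin.strictMono_succ, rfl, by simpa using hlast,
          fun i => by
            simpa only [Function.comp_apply, Fin.succ_castSucc] using hcov i.succ⟩
      exact h0 ▸ CoverChain.cons (hmem 0) (hcov 0) htail.coverChain

namespace FlatAxioms

variable (h𝓕 : FlatAxioms 𝓕) (hC : IsFlatClosure 𝓕 C) {a F G : Submodule K E}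
include h𝓕 hC

lemma flatCovers_closure_sup_span (hF : F ∈ 𝓕) {v : E} (hv : v ∉ F) :
    FlatCovers 𝓕 F (C (F ⊔ K ∙ v)) := by
  have hv0 : v ≠ 0 := fun h => hv (h ▸ F.zero_mem)
  obtain ⟨F', ⟨hF', hvF', hFF'⟩, -⟩ := h𝓕.2.2 F hF (K ∙ v) (finrank_span_singleton hv0)
    (mt (Submodule.span_singleton_le_iff_mem v F).mp hv)
  have hv_mem : v ∈ C (F ⊔ K ∙ v) :=
    le_sup_right.trans (hC.le_closure _) (Submodule.mem_span_singleton_self v)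
  have hlt : F < C (F ⊔ K ∙ v) :=
    lt_of_le_of_ne (le_sup_left.trans (hC.le_closure _)) (fun h => hv (h ▸ hv_mem))
  rwa [hFF'.eq_of_lt_of_le (hC.mem _) hlt (hC.closure_le hF' (sup_le hFF'.1.le hvF'))]

lemma eq_closure_sup_span_of_flatCovers (hF : F ∈ 𝓕) (hG : G ∈ 𝓕) (hFG : FlatCovers 𝓕 F G)
    {v : E} (hvG : v ∈ G) (hvF : v ∉ F) : G = C (F ⊔ K ∙ v) :=
  (hFG.eq_of_lt_of_le (hC.mem _) (h𝓕.flatCovers_closure_sup_span hC hF hvF).1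
    (hC.closure_le hG (sup_le hFG.1.le ((Submodule.span_singleton_le_iff_mem v G).mpr hvG)))).symm

/-- The semimodularity of `(𝓕, ⊆)`. -/
lemma flatCovers_closure_sup (ha : a ∈ 𝓕) (hF : F ∈ 𝓕) (hG : G ∈ 𝓕) (haF : FlatCovers 𝓕 a F)
    (haG : FlatCovers 𝓕 a G) (hne : F ≠ G) : FlatCovers 𝓕 F (C (F ⊔ G)) := by
  have hGF : ¬ G ≤ F := fun hle =>
    haF.2 G hG haG.1 (hle.lt_of_ne hne.symm)
  obtain ⟨v, hvG, hvF⟩ := SetLike.not_le_iff_exists.mp hGF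
  have hG_eq : G = C (a ⊔ K ∙ v) :=
    h𝓕.eq_closure_sup_span_of_flatCovers hC ha hG haG hvG (fun h => hvF (haF.1.le h))
  have hJ : C (F ⊔ G) = C (F ⊔ K ∙ v) := by
    rw [hG_eq, hC.closure_sup_closure_right, ← sup_assoc, sup_of_le_left haF.1.le]
  rw [hJ]
  exact h𝓕.flatCovers_closure_sup_span hC hF hvF

lemma exists_coverChain_closure_sup_span_singleton (hF : F ∈ 𝓕) (v : E) :
    ∃ m ≤ 1, CoverChain 𝓕 F (C (F ⊔ K ∙ v)) m := by
  by_cases hv : v ∈ F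
  · refine ⟨0, zero_le_one, ?_⟩
    rw [sup_of_le_left ((Submodule.span_singleton_le_iff_mem v F).mpr hv), hC.closure_eq_self hF]
    exact .refl hF
  · exact ⟨1, le_rfl, .cons hF (h𝓕.flatCovers_closure_sup_span hC hF hv) (.refl (hC.mem _))⟩

lemma exists_coverChain_closure_sup_span_finset [DecidableEq E] (s : Finset E) (hF : F ∈ 𝓕) :
    ∃ m ≤ s.card, CoverChain 𝓕 F (C (F ⊔ Submodule.span K s)) m := by
  induction s using Finset.induction_on generalizing F with
  | empty =>
    refine ⟨0, le_rfl, ?_⟩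
    rw [Finset.coe_empty, Submodule.span_empty, sup_bot_eq, hC.closure_eq_self hF]
    exact .refl hF
  | @insert v s hvs ih =>
    obtain ⟨k, hk, hFF'⟩ := h𝓕.exists_coverChain_closure_sup_span_singleton hC hF v
    obtain ⟨m, hm, hF'⟩ := ih (hC.mem (F ⊔ K ∙ v))
    refine ⟨k + m, by rw [Finset.card_insert_of_notMem hvs]; omega, ?_⟩
    rw [Finset.coe_insert, Submodule.span_insert, ← sup_assoc, ← hC.closure_sup_closure_left]
    exact hFF'.trans hF'

lemma exists_coverChain_closure_sup_le {D D' : Submodule K E} {k : ℕ}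
    (hDD' : CoverChain 𝓕 D D' k) (hF : F ∈ 𝓕) (hDF : D ≤ F) :
    ∃ m ≤ k, CoverChain 𝓕 F (C (F ⊔ D')) m := by
  induction hDD' generalizing F with
  | refl _ =>
    refine ⟨0, le_rfl, ?_⟩
    rw [sup_of_le_left hDF, hC.closure_eq_self hF]
    exact .refl hF
  | @cons X Y Z k hX hXY hYZ ih =>
    by_cases hYF : Y ≤ F
    · obtain ⟨m, hm, hchain⟩ := ih hF hYF
      exact ⟨m, hm.trans k.le_succ, hchain⟩
    obtain ⟨v, hvY, hvF⟩ := SetLike.not_le_iff_exists.mp hYF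
    have hFF' := h𝓕.flatCovers_closure_sup_span hC hF hvF
    have hYF' : Y ≤ C (F ⊔ K ∙ v) := by
      rw [h𝓕.eq_closure_sup_span_of_flatCovers hC hX hYZ.mem_left hXY hvY (fun h => hvF (hDF h))]
      exact hC.closure_mono (sup_le_sup_right hDF _)
    obtain ⟨m, hm, hchain⟩ := ih (hC.mem _) hYF'
    have hvZ : K ∙ v ≤ Z := (Submodule.span_singleton_le_iff_mem v Z).mpr (hYZ.le hvY)
    rw [hC.closure_sup_closure_left, sup_assoc, sup_of_le_right hvZ] at hchain
    exact ⟨m + 1, by omega, .cons hF hFF' hchain⟩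

variable [FiniteDimensional K E]

lemma exists_coverChain (hF : F ∈ 𝓕) (hG : G ∈ 𝓕) (hFG : F ≤ G) : ∃ k, CoverChain 𝓕 F G k := by
  induction F using WellFoundedGT.induction with
  | _ F ih =>
    obtain rfl | hlt := hFG.eq_or_lt
    · exact ⟨0, .refl hF⟩
    obtain ⟨v, hvG, hvF⟩ := SetLike.exists_of_lt hlt
    have hcov := h𝓕.flatCovers_closure_sup_span hC hF hvF
    obtain ⟨k, hk⟩ := ih _ hcov.1 (hC.mem _)
      (hC.closure_le hG (sup_le hFG ((Submodule.span_singleton_le_iff_mem v G).mpr hvG)))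
    exact ⟨k + 1, .cons hF hcov hk⟩

/-- The Jordan–Dedekind chain condition for `(𝓕, ⊆)`. -/
lemma coverChain_length_unique {m n : ℕ} (hm : CoverChain 𝓕 F G m) (hn : CoverChain 𝓕 F G n) :
    m = n := by
  induction m using Nat.strong_induction_on generalizing n F with
  | _ m ih =>
    cases hm with
    | refl _ => cases hn with
      | refl _ => rfl
      | cons _ hcov t => exact absurd (hcov.1.trans_le t.le) (lt_irrefl _)
    | @cons _ F₁ _ m₁ hF hcov₁ t₁ => cases hn with
      | refl _ => exact absurd (hcov₁.1.trans_le t₁.le) (lt_irrefl _)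
      | @cons _ G₁ _ n₁ _ hcov₂ t₂ =>
        obtain rfl | hne := eq_or_ne F₁ G₁
        · rw [ih m₁ (by omega) t₁ t₂]
        have hF₁ := t₁.mem_left
        have hG₁ := t₂.mem_left
        have hJ := hC.mem (F₁ ⊔ G₁)
        obtain ⟨k, hk⟩ := h𝓕.exists_coverChain hC hJ t₁.mem_right
          (hC.closure_le t₁.mem_right (sup_le t₁.le t₂.le))
        have hF₁J := h𝓕.flatCovers_closure_sup hC hF hF₁ hG₁ hcov₁ hcov₂ hne
        have hG₁J := h𝓕.flatCovers_closure_sup hC hF hG₁ hF₁ hcov₂ hcov₁ hne.symm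
        rw [sup_comm] at hG₁J
        have e₁ : m₁ = k + 1 := ih m₁ (by omega) t₁ (.cons hF₁ hF₁J hk)
        have e₂ : k + 1 = n₁ := ih (k + 1) (by omega) (.cons hG₁ hG₁J hk) t₂
        omega

lemma coverChain_length_le_of_le {X : Submodule K E} {m n : ℕ} (hm : CoverChain 𝓕 X F m)
    (hn : CoverChain 𝓕 X G n) (hFG : F ≤ G) : m ≤ n := by
  obtain ⟨k, hk⟩ := h𝓕.exists_coverChain hC hm.mem_right hn.mem_right hFG
  have := h𝓕.coverChain_length_unique hC (hm.trans hk) hn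
  omega

lemma exists_coverChain_closure_le_finrank (A : Submodule K E) :
    ∃ m ≤ Module.finrank K A, CoverChain 𝓕 (C ⊥) (C A) m := by
  classical
  obtain ⟨s, -, hs_card, hs_span, -⟩ := Submodule.exists_finset_span_eq_linearIndepOn K (A : Set E)
  rw [Submodule.span_eq] at hs_card hs_span
  obtain ⟨m, hm, hchain⟩ := h𝓕.exists_coverChain_closure_sup_span_finset hC s (hC.mem ⊥)
  rw [hs_span, hC.closure_sup_closure_left, bot_sup_eq] at hchain
  exact ⟨m, hs_card ▸ hm, hchain⟩

end FlatAxioms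

end

theorem stmt7 {K E : Type*} [Field K] [AddCommGroup E] [Module K E]
    [FiniteDimensional K E]
    (𝓕 : Set (Submodule K E)) (h𝓕 : FlatAxioms 𝓕)
    (C : Submodule K E → Submodule K E)
    (hC : ∀ A : Submodule K E, C A ∈ 𝓕 ∧ A ≤ C A ∧ ∀ G ∈ 𝓕, A ≤ G → C A ≤ G)
    (r : Submodule K E → ℕ)
    (hr : ∀ A : Submodule K E,
      ∃ c : Fin (r A + 1) → Submodule K E, IsMaxChainTo 𝓕 (C ⊥) (C A) (r A) c) :
    (∀ A : Submodule K E, r A ≤ Module.finrank K A) ∧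
    (∀ A B : Submodule K E, A ≤ B → r A ≤ r B) ∧
    (∀ A B : Submodule K E, r (A ⊔ B) + r (A ⊓ B) ≤ r A + r B) := by
  replace hC : IsFlatClosure 𝓕 C := hC
  have hrC : ∀ A, CoverChain 𝓕 (C ⊥) (C A) (r A) := fun A =>
    (hr A).elim fun _ hc => hc.coverChain
  refine ⟨fun A => ?_, fun A B hAB => ?_, fun A B => ?_⟩
  · obtain ⟨m, hm, hchain⟩ := h𝓕.exists_coverChain_closure_le_finrank hC A
    exact (h𝓕.coverChain_length_unique hC (hrC A) hchain).trans_le hm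
  · exact h𝓕.coverChain_length_le_of_le hC (hrC A) (hrC B) (hC.closure_mono hAB)
  · have hD : C A ⊓ C B ∈ 𝓕 := h𝓕.2.1 _ (hC.mem A) _ (hC.mem B)
    obtain ⟨p, hp⟩ := h𝓕.exists_coverChain hC (hC.mem ⊥) hD (hC.closure_le hD bot_le)
    obtain ⟨k, hk⟩ := h𝓕.exists_coverChain hC hD (hC.mem B) inf_le_right
    obtain ⟨m, hmk, hm⟩ := h𝓕.exists_coverChain_closure_sup_le hC hk (hC.mem A) inf_le_left
    rw [hC.closure_sup_closure_left, hC.closure_sup_closure_right] at hm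
    have hrB : r B = p + k := h𝓕.coverChain_length_unique hC (hrC B) (hp.trans hk)
    have hrsup : r (A ⊔ B) = r A + m :=
      h𝓕.coverChain_length_unique hC (hrC _) ((hrC A).trans hm)
    have hrinf : r (A ⊓ B) ≤ p := h𝓕.coverChain_length_le_of_le hC (hrC _) hp
      (hC.closure_le hD (inf_le_inf (hC.le_closure A) (hC.le_closure B)))
    omega
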